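/- The map ψ defined by ψ(r, x, y) = ((2 + √3)r, 2x + 3y, x + 2y) maps E bijectively onto E and maps E₊ onto E₊; that is, ψ is an order automorphism of (E, E₊) whose first component scales by 2 + √3. -/
import Mathlib


/-- The additive subgroup `E` of `ℝ × ℤ × ℤ`: all triples `(r, x, y)` such that
`r = (j + k√3)/5^(6i)`, `x ≡ j (mod 9)` and `y ≡ k (mod 3)` for some integers `i, j, k`. -/
def Eset : Set (ℝ × ℤ × ℤ) :=
  {p | ∃ i j k : ℤ, p.1 = ((j : ℝ) + (k : ℝ) * Real.sqrt 3) / (5 : ℝ) ^ (6 * i) ∧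
    p.2.1 ≡ j [ZMOD 9] ∧ p.2.2 ≡ k [ZMOD 3]}

/-- The positive cone `E₊ = {(r, x, y) ∈ E : r > 0} ∪ {(0, 0, 0)}`. -/
def Epos : Set (ℝ × ℤ × ℤ) :=
  {p | p ∈ Eset ∧ 0 < p.1} ∪ {0}

/-- An order automorphism of `(E, E₊)`: an additive group automorphism of `E`
(a bijection of `E` onto itself which is additive on `E`) with `φ(E₊) = E₊`. -/
structure IsOrderAuto (φ : ℝ × ℤ × ℤ → ℝ × ℤ × ℤ) : Prop where
  bijOn : Set.BijOn φ Eset Eset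
  addOn : ∀ p ∈ Eset, ∀ q ∈ Eset, φ (p + q) = φ p + φ q
  posEq : φ '' Epos = Epos

noncomputable def psi : ℝ × ℤ × ℤ → ℝ × ℤ × ℤ :=
  fun p => ((2 + Real.sqrt 3) * p.1, 2 * p.2.1 + 3 * p.2.2, p.2.1 + 2 * p.2.2)

noncomputable def psiInv : ℝ × ℤ × ℤ → ℝ × ℤ × ℤ :=
  fun p => ((2 - Real.sqrt 3) * p.1, 2 * p.2.1 - 3 * p.2.2, -p.2.1 + 2 * p.2.2)

lemma hs : Real.sqrt 3 * Real.sqrt 3 = 3 := Real.mul_self_sqrt (by norm_num)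

lemma sqrt3_lt_two : Real.sqrt 3 < 2 := by
  nlinarith [hs, Real.sqrt_nonneg 3]

lemma psi_maps : ∀ p ∈ Eset, psi p ∈ Eset := by
  rintro ⟨r, x, y⟩ ⟨i, j, k, h1, h2, h3⟩
  simp only at h1 h2 h3
  refine ⟨i, 2 * j + 3 * k, j + 2 * k, ?_, ?_, ?_⟩
  · show (2 + Real.sqrt 3) * r = _
    rw [h1, mul_div_assoc']
    congr 1
    push_cast
    linear_combination (k : ℝ) * hs
  · show _ ≡ _ [ZMOD _]
    simp only [psi, psiInv, Int.ModEq] at h2 h3 ⊢; omega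
  · show _ ≡ _ [ZMOD _]
    simp only [psi, psiInv, Int.ModEq] at h2 h3 ⊢; omega

lemma psiInv_maps : ∀ p ∈ Eset, psiInv p ∈ Eset := by
  rintro ⟨r, x, y⟩ ⟨i, j, k, h1, h2, h3⟩
  simp only at h1 h2 h3
  refine ⟨i, 2 * j - 3 * k, -j + 2 * k, ?_, ?_, ?_⟩
  · show (2 - Real.sqrt 3) * r = _
    rw [h1, mul_div_assoc']
    congr 1
    push_cast
    linear_combination (-k : ℝ) * hs
  · show _ ≡ _ [ZMOD _]
    simp only [psi, psiInv, Int.ModEq] at h2 h3 ⊢; omega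
  · show _ ≡ _ [ZMOD _]
    simp only [psi, psiInv, Int.ModEq] at h2 h3 ⊢; omega

lemma left_inv : ∀ p, psiInv (psi p) = p := by
  rintro ⟨r, x, y⟩
  refine Prod.ext ?_ (Prod.ext ?_ ?_) <;> simp only [psi, psiInv]
  · linear_combination (-r) * hs
  · ring
  · ring

lemma right_inv : ∀ p, psi (psiInv p) = p := by
  rintro ⟨r, x, y⟩
  refine Prod.ext ?_ (Prod.ext ?_ ?_) <;> simp only [psi, psiInv]
  · linear_combination (-r) * hs
  · ring
  · ring

lemma psi_pos : ∀ p ∈ Epos, psi p ∈ Epos := by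
  rintro p (⟨hE, hpos⟩ | h)
  · exact Or.inl ⟨psi_maps p hE, by
      have : (0:ℝ) < 2 + Real.sqrt 3 := by positivity
      exact mul_pos this hpos⟩
  · right; simp only [Set.mem_singleton_iff] at h ⊢
    subst h; simp [psi]

lemma psiInv_pos : ∀ p ∈ Epos, psiInv p ∈ Epos := by
  rintro p (⟨hE, hpos⟩ | h)
  · exact Or.inl ⟨psiInv_maps p hE, by
      have : (0:ℝ) < 2 - Real.sqrt 3 := by linarith [sqrt3_lt_two]
      exact mul_pos this hpos⟩
  · right; simp only [Set.mem_singleton_iff] at h ⊢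
    subst h; simp [psiInv]

/-- The map `ψ(r, x, y) = ((2 + √3)r, 2x + 3y, x + 2y)` maps `E` bijectively onto `E`
and maps `E₊` onto `E₊`; that is, `ψ` is an order automorphism of `(E, E₊)` whose first
component scales by `2 + √3`. -/
theorem stmt_9 :
    IsOrderAuto (fun p : ℝ × ℤ × ℤ =>
      ((2 + Real.sqrt 3) * p.1, 2 * p.2.1 + 3 * p.2.2, p.2.1 + 2 * p.2.2)) := by
  have hpsi : (fun p : ℝ × ℤ × ℤ =>
      ((2 + Real.sqrt 3) * p.1, 2 * p.2.1 + 3 * p.2.2, p.2.1 + 2 * p.2.2)) = psi := rfl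
  rw [hpsi]
  refine ⟨?_, ?_, ?_⟩
  · exact Set.InvOn.bijOn ⟨fun p _ => left_inv p, fun p _ => right_inv p⟩
      psi_maps psiInv_maps
  · intro p _ q _
    simp only [psi, Prod.mk_add_mk, Prod.fst_add, Prod.snd_add]
    refine Prod.ext ?_ (Prod.ext ?_ ?_) <;> simp <;> ring
  · apply Set.eq_of_subset_of_subset
    · rintro q ⟨p, hp, rfl⟩; exact psi_pos p hp
    · intro q hq
      exact ⟨psiInv q, psiInv_pos q hq, right_inv q⟩
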